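/- Let C be a 12-cycle of the Heawood graph and let v and w be the two vertices of the Heawood graph not belonging to the vertex set of C. Then v and w are not adjacent in the Heawood graph. -/

import Mathlib

instance : DecidablePred (Even : ZMod 14 → Prop) :=
  fun i => decidable_of_iff (∃ r, i = r + r) Iff.rfl

instance : DecidablePred (Odd : ZMod 14 → Prop) :=
  fun i => decidable_of_iff (∃ r, i = 2 * r + 1) Iff.rfl

/-- The Heawood graph: the simple graph on vertex set `ZMod 14` in which distinct vertices
`i` and `j` are adjacent iff `j = i + 1`, or `j = i - 1`, or (`i` is even and `j = i + 5`),
or (`i` is odd and `j = i - 5`). -/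
def heawood : SimpleGraph (ZMod 14) where
  Adj i j := i ≠ j ∧ (j = i + 1 ∨ j = i - 1 ∨ (Even i ∧ j = i + 5) ∨ (Odd i ∧ j = i - 5))
  symm := ⟨by intro i j; revert i j; decide⟩
  loopless := ⟨by intro i; revert i; decide⟩

/-- An `n`-cycle of a simple graph `G` is a subgraph of `G` isomorphic to the cycle graph
on `n` vertices. -/
def IsNCycle {V : Type*} {G : SimpleGraph V} (n : ℕ) (C : G.Subgraph) : Prop :=
  Nonempty (C.coe ≃g SimpleGraph.cycleGraph n)

open Fin.NatCast

instance : DecidableRel heawood.Adj :=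
  fun i j => inferInstanceAs (Decidable (i ≠ j ∧ (j = i + 1 ∨ j = i - 1 ∨ (Even i ∧ j = i + 5) ∨ (Odd i ∧ j = i - 5))))

def nbrTable : List (List (ZMod 14)) :=
  [[1,5,13],[0,2,10],[1,3,7],[2,4,12],[3,5,9],[0,4,6],[5,7,11],[2,6,8],[7,9,13],[4,8,10],[1,9,11],[6,10,12],[3,11,13],[0,8,12]]

def nbrs (x : ZMod 14) : List (ZMod 14) := nbrTable.getD x.val []

theorem mem_nbrs {x y : ZMod 14} : heawood.Adj x y ↔ y ∈ nbrs x := by revert x y; decide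

def extend (v w : ZMod 14) (p : List (ZMod 14)) : List (List (ZMod 14)) :=
  match p with
  | [] => []
  | x :: _ => ((nbrs x).filter (fun y => y ≠ v ∧ y ≠ w ∧ y ∉ p)).map (· :: p)

def paths (v w s : ZMod 14) : ℕ → List (List (ZMod 14))
  | 0 => [[s]]
  | n + 1 => (paths v w s n).flatMap (extend v w)

def pick (v w : ZMod 14) : ZMod 14 :=
  if 0 = v ∨ 0 = w then (if 1 = v ∨ 1 = w then 2 else 1) else 0

theorem pick_spec : ∀ v w : ZMod 14, pick v w ≠ v ∧ pick v w ≠ w := by decide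

set_option maxHeartbeats 4000000 in
theorem search : ∀ v w : ZMod 14, heawood.Adj v w →
    ∀ p ∈ paths v w (pick v w) 11, ∀ x, p.head? = some x → ¬ heawood.Adj x (pick v w) := by
  decide

/-- `chain h k = [h k, h (k-1), ..., h 0]` -/
def chain (h : Fin 12 → ZMod 14) : ℕ → List (ZMod 14)
  | 0 => [h 0]
  | k + 1 => h (k + 1 : ℕ) :: chain h k

theorem mem_chain {h : Fin 12 → ZMod 14} {k : ℕ} {x : ZMod 14} :
    x ∈ chain h k ↔ ∃ j : ℕ, j ≤ k ∧ x = h j := by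
  induction k with
  | zero =>
    simp only [chain, List.mem_singleton, Nat.le_zero]
    exact ⟨fun hx => ⟨0, rfl, hx⟩, fun ⟨j, hj, hx⟩ => by subst hj; exact hx⟩
  | succ k ih =>
    simp only [chain, List.mem_cons, ih]
    constructor
    · rintro (rfl | ⟨j, hj, rfl⟩)
      · exact ⟨k + 1, le_refl _, rfl⟩
      · exact ⟨j, Nat.le_succ_of_le hj, rfl⟩
    · rintro ⟨j, hj, rfl⟩
      rcases Nat.eq_or_lt_of_le hj with rfl | hj'
      · exact Or.inl rfl
      · exact Or.inr ⟨j, Nat.lt_succ_iff.mp hj', rfl⟩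

/-- If `C` is a `12`-cycle of the Heawood graph and `v`, `w` are the two vertices not on `C`,
then `v` and `w` are not adjacent. -/
theorem heawood_12_cycle_complement_nonadjacent (C : heawood.Subgraph)
    (hC : IsNCycle 12 C) (v w : ZMod 14) (hvw : v ≠ w)
    (hcompl : C.vertsᶜ = {v, w}) :
    ¬ heawood.Adj v w := by
  intro hadj
  obtain ⟨e⟩ := hC
  have hverts : C.verts = ({v, w} : Set (ZMod 14))ᶜ := by
    rw [← hcompl, compl_compl]
  set g : Fin 12 → ZMod 14 := fun i => (e.symm i : ZMod 14) with hg
  have hg_inj : Function.Injective g := fun a b hab => by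
    have := e.symm.injective (Subtype.ext hab)
    exact this
  have hg_mem : ∀ i, g i ∈ C.verts := fun i => (e.symm i).2
  have hg_adj : ∀ i : Fin 12, heawood.Adj (g i) (g (i + 1)) := by
    intro i
    have hcyc : (SimpleGraph.cycleGraph 12).Adj i (i + 1) := by revert i; decide
    have := e.symm.map_adj_iff.mpr hcyc
    exact C.adj_sub ((SimpleGraph.Subgraph.coe_adj _ _ _).mp this)
  have hsurj : ∀ x, x ∈ C.verts → ∃ i, g i = x := by
    intro x hx
    exact ⟨e ⟨x, hx⟩, by simp [hg]⟩
  set s := pick v w with hs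
  have hsv := (pick_spec v w).1
  have hsw := (pick_spec v w).2
  have hsmem : s ∈ C.verts := by
    rw [hverts]; simp [hs, hsv, hsw]
  obtain ⟨i0, hi0⟩ := hsurj s hsmem
  set h : Fin 12 → ZMod 14 := fun j => g (i0 + j) with hh
  have hh_inj : Function.Injective h := fun a b hab => by
    have := hg_inj hab
    exact add_left_cancel this
  have hh_adj : ∀ j : Fin 12, heawood.Adj (h j) (h (j + 1)) := by
    intro j
    have := hg_adj (i0 + j)
    simpa [hh, add_assoc] using this
  have hh_ne : ∀ j, h j ≠ v ∧ h j ≠ w := by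
    intro j
    have := hg_mem (i0 + j)
    rw [hverts] at this
    simp only [Set.mem_compl_iff, Set.mem_insert_iff, Set.mem_singleton_iff] at this
    exact ⟨fun hjv => this (Or.inl hjv), fun hjw => this (Or.inr hjw)⟩
  have hh0 : h 0 = s := by simp [hh, hi0]
  -- head of chain
  have chain_head : ∀ k : ℕ, (chain h k).head? = some (h k) := by
    intro k; cases k <;> rfl
  have key : ∀ k : ℕ, k ≤ 11 → chain h k ∈ paths v w s k := by
    intro k
    induction k with
    | zero => intro _; simp [chain, paths, hh0]
    | succ k ih =>
      intro hk1
      have hk : k ≤ 11 := Nat.le_of_succ_le hk1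
      have hmem := ih hk
      show chain h (k + 1) ∈ (paths v w s k).flatMap (extend v w)
      rw [List.mem_flatMap]
      refine ⟨chain h k, hmem, ?_⟩
      have hcast : ((k + 1 : ℕ) : Fin 12) = (k : Fin 12) + 1 := by push_cast; ring
      have hadj' : heawood.Adj (h k) (h (k + 1 : ℕ)) := by
        rw [hcast]; exact hh_adj k
      have hnotmem : h (k + 1 : ℕ) ∉ chain h k := by
        rw [mem_chain]
        rintro ⟨j, hj, hjx⟩
        have : ((k + 1 : ℕ) : Fin 12) = (j : Fin 12) := hh_inj hjx
        have hj12 : j < 12 := lt_of_le_of_lt hj (by omega)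
        have hk12 : k + 1 < 12 := by omega
        have : k + 1 = j := by
          have h1 := congrArg Fin.val this
          rwa [Fin.val_cast_of_lt hk12, Fin.val_cast_of_lt hj12] at h1
        omega
      -- chain h k has head h k
      have hcons : ∃ rest, chain h k = h k :: rest := by
        cases k with
        | zero => exact ⟨[], rfl⟩
        | succ m => exact ⟨chain h m, rfl⟩
      obtain ⟨rest, hrest⟩ := hcons
      rw [hrest]
      show chain h (k + 1) ∈ ((nbrs (h k)).filter (fun y => y ≠ v ∧ y ≠ w ∧ y ∉ (h k :: rest))).map (· :: (h k :: rest))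
      rw [List.mem_map]
      refine ⟨h (k + 1 : ℕ), ?_, by rw [← hrest]; rfl⟩
      rw [List.mem_filter]
      refine ⟨mem_nbrs.mp hadj', ?_⟩
      have h1 := (hh_ne (k + 1 : ℕ)).1
      have h2 := (hh_ne (k + 1 : ℕ)).2
      have h3 : h (k + 1 : ℕ) ∉ (h k :: rest) := by rw [← hrest]; exact hnotmem
      rw [hcast] at h1 h2 h3
      simp only [List.mem_cons, not_or] at h3
      simp [h1, h2, h3.1, h3.2]
  have hfinal := search v w hadj (chain h 11) (key 11 (le_refl _)) (h (11 : ℕ)) (chain_head 11)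
  apply hfinal
  have h11 : ((11 : ℕ) : Fin 12) + 1 = 0 := by decide
  have := hh_adj ((11 : ℕ) : Fin 12)
  rw [h11, hh0] at this
  exact this
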